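/- Two nonzero (N+1)×(N+1) matrices over a field have the same corner polyhedron if and only if they have the same profile (as a Dyck path). -/

import Mathlib

/-!
The corner polyhedron of `M` is generated by the roots `e_r - e_c` of its nonzero entries, and
`e_r - e_c ∈ e_a - e_b + O⁺` exactly when `b ≤ c` and `r ≤ a`, or when `b ≤ a` and `r ≤ c`.
Hence a root `e_r - e_c` lies in the corner polyhedron iff the profile path contains `(r, c)`,
i.e. `r < profile (c + 1)`; otherwise the sum of the partial sums `s_k` over a window of
indices `k` (the interval `[c, r)`, or the complement of `[r, c)`) separates it.
So `cornerOf M₁ ⊆ cornerOf M₂` iff the profile of `M₂` contains every nonzero entry of `M₁`,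
which amounts to `profile M₁ ≤ profile M₂` pointwise.
-/

open Pointwise
open scoped Classical

/-- The functional summing the first `k+1` coordinates (the `(k+1)`-st partial sum `s_{k+1}`). -/
def sfun (N : ℕ) (k : Fin N) (w : Fin (N + 1) → ℝ) : ℝ :=
  ∑ l ∈ Finset.univ.filter (fun l : Fin (N + 1) => (l : ℕ) ≤ (k : ℕ)), w l

/-- The root vector `e_i - e_j` of the `A_N` lattice. -/
def rootVec (N : ℕ) (i j : Fin (N + 1)) : Fin (N + 1) → ℝ :=
  Pi.single i 1 - Pi.single j 1

/-- The cone `O⁺` of sum-zero vectors on which all partial-sum functionals are nonnegative. -/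
def Oplus (N : ℕ) : Set (Fin (N + 1) → ℝ) :=
  {w | (∑ l, w l = 0) ∧ ∀ k : Fin N, 0 ≤ sfun N k w}

/-- `(i,j)` outweighs `(i',j')` if `e_{i'} - e_{j'} ∈ (e_i - e_j) + O⁺` and the two differ. -/
def Outweighs (N : ℕ) (p q : Fin (N + 1) × Fin (N + 1)) : Prop :=
  rootVec N q.1 q.2 ≠ rootVec N p.1 p.2 ∧
  ∃ o : Fin (N + 1) → ℝ, o ∈ Oplus N ∧ rootVec N q.1 q.2 = rootVec N p.1 p.2 + o

/-- The corner polyhedron of a nonzero matrix: the corner hull (relative to the cone `O⁺`)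
of the root vectors `e_i - e_j` over the nonzero entries `(i,j)` of `M`. -/
def cornerOf {K : Type*} [Field K] (N : ℕ) (M : Matrix (Fin (N + 1)) (Fin (N + 1)) K) :
    Set (Fin (N + 1) → ℝ) :=
  convexHull ℝ ((fun p : Fin (N + 1) × Fin (N + 1) => rootVec N p.1 p.2) ''
      {p | M p.1 p.2 ≠ 0}) + Oplus N

/-- The Hessenberg function of `M` relative to the standard complete flag:
`hessFn N M i = min { j : M S_i ⊆ S_j }` where `S_i` is the span of the first `i`
standard basis vectors. -/
noncomputable def hessFn {K : Type*} [Field K] (N : ℕ)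
    (M : Matrix (Fin (N + 1)) (Fin (N + 1)) K) (i : ℕ) : ℕ :=
  sSup {h : ℕ | ∃ r c : Fin (N + 1), M r c ≠ 0 ∧ (c : ℕ) < i ∧ h = (r : ℕ) + 1}

/-- The profile of a nonzero matrix, encoded as a function `{0,…,N+1} → {0,…,N+1}`:
for a strictly upper-triangular matrix it is the Hessenberg function of the standard
complete flag (the minimal Dyck path on one side of the diagonal containing all nonzero
entries); otherwise it is the pointwise maximum of the identity and that Hessenberg
function (the minimal Dyck path on the other side of the diagonal containing all
nonzero entries). -/
noncomputable def profileFn {K : Type*} [Field K] (N : ℕ)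
    (M : Matrix (Fin (N + 1)) (Fin (N + 1)) K) (i : ℕ) : ℕ :=
  if ∃ r c : Fin (N + 1), (c : ℕ) ≤ (r : ℕ) ∧ M r c ≠ 0 then max i (hessFn N M i)
  else hessFn N M i

open Finset

section PartialSums
variable {N : ℕ}

lemma sfun_add (k : Fin N) (v w : Fin (N + 1) → ℝ) :
    sfun N k (v + w) = sfun N k v + sfun N k w := by
  simp only [sfun, Pi.add_apply, sum_add_distrib]

lemma sfun_smul (k : Fin N) (t : ℝ) (v : Fin (N + 1) → ℝ) :
    sfun N k (t • v) = t * sfun N k v := by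
  simp only [sfun, Pi.smul_apply, smul_eq_mul, mul_sum]

lemma sfun_sub (k : Fin N) (v w : Fin (N + 1) → ℝ) :
    sfun N k (v - w) = sfun N k v - sfun N k w := by
  simp only [sfun, Pi.sub_apply, sum_sub_distrib]

lemma isLinearMap_sum_sfun (S : Finset (Fin N)) :
    IsLinearMap ℝ fun w : Fin (N + 1) → ℝ => ∑ k ∈ S, sfun N k w where
  map_add v w := by simp only [sfun_add, sum_add_distrib]
  map_smul t v := by simp only [sfun_smul, smul_eq_mul, mul_sum]

lemma sfun_rootVec (k : Fin N) (i j : Fin (N + 1)) :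
    sfun N k (rootVec N i j) =
      (if (i : ℕ) ≤ k then 1 else 0) - (if (j : ℕ) ≤ k then 1 else 0) := by
  simp [rootVec, sfun, Pi.single_apply, sum_ite_eq']

lemma sum_rootVec (i j : Fin (N + 1)) : ∑ l, rootVec N i j l = 0 := by
  simp [rootVec, sum_sub_distrib]

lemma add_mem_Oplus {v w : Fin (N + 1) → ℝ} (hv : v ∈ Oplus N) (hw : w ∈ Oplus N) :
    v + w ∈ Oplus N :=
  ⟨by simp [sum_add_distrib, hv.1, hw.1],
    fun k => by rw [sfun_add]; exact add_nonneg (hv.2 k) (hw.2 k)⟩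

lemma smul_mem_Oplus {t : ℝ} (ht : 0 ≤ t) {v : Fin (N + 1) → ℝ} (hv : v ∈ Oplus N) :
    t • v ∈ Oplus N :=
  ⟨by simp [← mul_sum, hv.1], fun k => by rw [sfun_smul]; exact mul_nonneg ht (hv.2 k)⟩

lemma convex_Oplus : Convex ℝ (Oplus N) :=
  fun _ hx _ hy _ _ ha hb _ => add_mem_Oplus (smul_mem_Oplus ha hx) (smul_mem_Oplus hb hy)

lemma rootVec_sub_rootVec_mem_Oplus {a b r c : Fin (N + 1)}
    (h : ∀ k, sfun N k (rootVec N a b) ≤ sfun N k (rootVec N r c)) :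
    rootVec N r c - rootVec N a b ∈ Oplus N :=
  ⟨by simp [sum_sub_distrib, sum_rootVec], fun k => by rw [sfun_sub]; linarith [h k]⟩

end PartialSums

section CornerHull
variable {K : Type*} [Field K] {N : ℕ} {M M₁ M₂ : Matrix (Fin (N + 1)) (Fin (N + 1)) K}

lemma rootVec_mem_cornerOf {a b r c : Fin (N + 1)} (hab : M a b ≠ 0)
    (h : ∀ k, sfun N k (rootVec N a b) ≤ sfun N k (rootVec N r c)) :
    rootVec N r c ∈ cornerOf N M :=
  Set.mem_add.2 ⟨rootVec N a b, subset_convexHull ℝ _ ⟨(a, b), hab, rfl⟩,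
    _, rootVec_sub_rootVec_mem_Oplus h, add_sub_cancel _ _⟩

lemma convex_cornerOf : Convex ℝ (cornerOf N M) :=
  (convex_convexHull ℝ _).add convex_Oplus

lemma add_mem_cornerOf {x o : Fin (N + 1) → ℝ} (hx : x ∈ cornerOf N M) (ho : o ∈ Oplus N) :
    x + o ∈ cornerOf N M := by
  obtain ⟨y, hy, o', ho', rfl⟩ := hx
  exact ⟨y, hy, o' + o, add_mem_Oplus ho' ho, (add_assoc _ _ _).symm⟩

lemma cornerOf_subset_iff :
    cornerOf N M₁ ⊆ cornerOf N M₂ ↔ ∀ r c, M₁ r c ≠ 0 → rootVec N r c ∈ cornerOf N M₂ := by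
  refine ⟨fun h r c hrc => h (rootVec_mem_cornerOf hrc fun _ => le_rfl), fun h => ?_⟩
  rintro _ ⟨y, hy, o, ho, rfl⟩
  refine add_mem_cornerOf (convexHull_min ?_ convex_cornerOf hy) ho
  rintro _ ⟨p, hp, rfl⟩
  exact h p.1 p.2 hp

lemma notMem_cornerOf_of_lt_sum_sfun (S : Finset (Fin N)) (y : Fin (N + 1) → ℝ)
    (h : ∀ a b, M a b ≠ 0 → ∑ k ∈ S, sfun N k y < ∑ k ∈ S, sfun N k (rootVec N a b)) :
    y ∉ cornerOf N M := by
  rintro ⟨x, hx, o, ho, rfl⟩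
  have hx' : x ∈ {w | ∑ k ∈ S, sfun N k (x + o) < ∑ k ∈ S, sfun N k w} := by
    refine convexHull_min ?_ (convex_halfSpace_gt (isLinearMap_sum_sfun S) _) hx
    rintro _ ⟨p, hp, rfl⟩
    exact h p.1 p.2 hp
  have ho' : 0 ≤ ∑ k ∈ S, sfun N k o := sum_nonneg fun k _ => ho.2 k
  simp only [Set.mem_ofPred_eq, sfun_add, sum_add_distrib] at hx'
  linarith

end CornerHull

section Profile
variable {K : Type*} [Field K] {N : ℕ} {M M₁ M₂ : Matrix (Fin (N + 1)) (Fin (N + 1)) K}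

lemma lt_hessFn_iff {r i : ℕ} :
    r < hessFn N M i ↔ ∃ a b : Fin (N + 1), M a b ≠ 0 ∧ (b : ℕ) < i ∧ r ≤ a := by
  have hbdd : BddAbove
      {h : ℕ | ∃ a b : Fin (N + 1), M a b ≠ 0 ∧ (b : ℕ) < i ∧ h = (a : ℕ) + 1} :=
    ⟨N + 1, by rintro _ ⟨a, b, -, -, rfl⟩; omega⟩
  rw [hessFn, lt_csSup_iff' hbdd]
  constructor
  · rintro ⟨_, ⟨a, b, hab, hb, rfl⟩, hr⟩
    exact ⟨a, b, hab, hb, by omega⟩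
  · rintro ⟨a, b, hab, hb, hr⟩
    exact ⟨_, ⟨a, b, hab, hb, rfl⟩, by omega⟩

lemma lt_profileFn_iff {r i : ℕ} :
    r < profileFn N M i ↔
      ((∃ a b : Fin (N + 1), (b : ℕ) ≤ a ∧ M a b ≠ 0) ∧ r < i) ∨
        ∃ a b : Fin (N + 1), M a b ≠ 0 ∧ (b : ℕ) < i ∧ r ≤ a := by
  unfold profileFn
  split_ifs with hP
  · simp only [lt_max_iff, lt_hessFn_iff, hP, true_and]
  · simp only [lt_hessFn_iff, hP, false_and, false_or]

lemma forall_profileFn_le_iff :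
    (∀ i ≤ N + 1, profileFn N M₁ i ≤ profileFn N M₂ i) ↔
      ∀ r c : Fin (N + 1), M₁ r c ≠ 0 → (r : ℕ) < profileFn N M₂ (c + 1) := by
  constructor
  · intro h r c hrc
    exact lt_of_lt_of_le (lt_profileFn_iff.2 (Or.inr ⟨r, c, hrc, by omega, le_rfl⟩))
      (h _ (by omega))
  · intro h i _
    refine le_of_forall_lt fun r hr => ?_
    rcases lt_profileFn_iff.1 hr with ⟨⟨a, b, hba, hab⟩, hri⟩ | ⟨a, b, hab, hbi, hra⟩
    · -- the profile of `M₂` contains a lower entry of `M₁` only if `M₂` has a lower entry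
      refine lt_profileFn_iff.2 (Or.inl ⟨?_, hri⟩)
      rcases lt_profileFn_iff.1 (h a b hab) with ⟨hP, -⟩ | ⟨a', b', hab', hb', ha'⟩
      · exact hP
      · exact ⟨a', b', by omega, hab'⟩
    · rcases lt_profileFn_iff.1 (h a b hab) with ⟨hP, hab'⟩ | ⟨a', b', hab', hb', ha'⟩
      · exact lt_profileFn_iff.2 (Or.inl ⟨hP, by omega⟩)
      · exact lt_profileFn_iff.2 (Or.inr ⟨a', b', hab', by omega, by omega⟩)

end Profile

section Membership
variable {K : Type*} [Field K] {N : ℕ} {M M₁ M₂ : Matrix (Fin (N + 1)) (Fin (N + 1)) K}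

lemma rootVec_notMem_cornerOf_of_lt {r c : Fin (N + 1)} (hcr : (c : ℕ) < r)
    (hM : ∀ a b, M a b ≠ 0 → (c : ℕ) < b ∨ (a : ℕ) < r) :
    rootVec N r c ∉ cornerOf N M := by
  refine notMem_cornerOf_of_lt_sum_sfun {k | (c : ℕ) ≤ k ∧ (k : ℕ) < r} _
    fun a b hab => sum_lt_sum (fun k hk => ?_) ?_
  · simp only [mem_filter, mem_univ, true_and] at hk
    simp only [sfun_rootVec]
    split_ifs <;> first | omega | norm_num
  · rcases hM a b hab with hcb | har
    · refine ⟨⟨c, by omega⟩, by simp only [mem_filter, mem_univ, true_and]; omega, ?_⟩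
      simp only [sfun_rootVec]
      split_ifs <;> first | omega | norm_num
    · refine ⟨⟨r - 1, by omega⟩, by simp only [mem_filter, mem_univ, true_and]; omega, ?_⟩
      simp only [sfun_rootVec]
      split_ifs <;> first | omega | norm_num

lemma rootVec_notMem_cornerOf_of_le {r c : Fin (N + 1)} (hrc : (r : ℕ) ≤ c)
    (hup : ∀ a b, M a b ≠ 0 → (a : ℕ) < b)
    (hM : ∀ a b, M a b ≠ 0 → (a : ℕ) < r ∨ (c : ℕ) < b) :
    rootVec N r c ∉ cornerOf N M := by
  refine notMem_cornerOf_of_lt_sum_sfun {k | ¬((r : ℕ) ≤ k ∧ (k : ℕ) < c)} _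
    fun a b hab => sum_lt_sum (fun k hk => ?_) ?_
  · have := hup a b hab
    simp only [mem_filter, mem_univ, true_and] at hk
    simp only [sfun_rootVec]
    split_ifs <;> first | omega | norm_num
  · have := hup a b hab
    rcases hM a b hab with har | hcb
    · refine ⟨⟨a, by omega⟩, by simp only [mem_filter, mem_univ, true_and]; omega, ?_⟩
      simp only [sfun_rootVec]
      split_ifs <;> first | omega | norm_num
    · refine ⟨⟨b - 1, by omega⟩, by simp only [mem_filter, mem_univ, true_and]; omega, ?_⟩
      simp only [sfun_rootVec]
      split_ifs <;> first | omega | norm_num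

lemma rootVec_mem_cornerOf_iff {r c : Fin (N + 1)} :
    rootVec N r c ∈ cornerOf N M ↔ (r : ℕ) < profileFn N M (c + 1) := by
  rw [lt_profileFn_iff]
  constructor
  · intro hmem
    by_contra hne
    rcases lt_or_ge (c : ℕ) r with hcr | hrc
    · refine rootVec_notMem_cornerOf_of_lt hcr (fun a b hab => ?_) hmem
      by_contra! h
      exact hne (Or.inr ⟨a, b, hab, by omega, h.2⟩)
    · refine rootVec_notMem_cornerOf_of_le hrc (fun a b hab => ?_) (fun a b hab => ?_) hmem
      · by_contra! h
        exact hne (Or.inl ⟨⟨a, b, h, hab⟩, by omega⟩)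
      · by_contra! h
        exact hne (Or.inr ⟨a, b, hab, by omega, h.1⟩)
  · rintro (⟨⟨a, b, hba, hab⟩, hrc⟩ | ⟨a, b, hab, hbc, hra⟩) <;>
      refine rootVec_mem_cornerOf hab fun k => ?_ <;>
      simp only [sfun_rootVec] <;>
      split_ifs <;> first | omega | norm_num

lemma cornerOf_subset_iff_profileFn_le :
    cornerOf N M₁ ⊆ cornerOf N M₂ ↔ ∀ i ≤ N + 1, profileFn N M₁ i ≤ profileFn N M₂ i := by
  simp only [cornerOf_subset_iff, rootVec_mem_cornerOf_iff, forall_profileFn_le_iff]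

end Membership

theorem stmt12_general {K : Type*} [Field K] (N : ℕ)
    (M₁ M₂ : Matrix (Fin (N + 1)) (Fin (N + 1)) K) :
    cornerOf N M₁ = cornerOf N M₂ ↔
      ∀ i ≤ N + 1, profileFn N M₁ i = profileFn N M₂ i := by
  rw [Set.Subset.antisymm_iff, cornerOf_subset_iff_profileFn_le,
    cornerOf_subset_iff_profileFn_le]
  exact ⟨fun h i hi => le_antisymm (h.1 i hi) (h.2 i hi),
    fun h => ⟨fun i hi => (h i hi).le, fun i hi => (h i hi).ge⟩⟩

theorem stmt12 {K : Type*} [Field K] (N : ℕ)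
    (M₁ M₂ : Matrix (Fin (N + 1)) (Fin (N + 1)) K) (h₁ : M₁ ≠ 0) (h₂ : M₂ ≠ 0) :
    cornerOf N M₁ = cornerOf N M₂ ↔
      ∀ i ≤ N + 1, profileFn N M₁ i = profileFn N M₂ i :=
  stmt12_general N M₁ M₂
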